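/- arXiv:2507.15497 — 3 statements merged into one kernel-verified Lean document; each statement's English description precedes it below -/
import Mathlib

section
/- Suppose M > N > R, P > 0, Q > 0, and 0 < Q(N−R) + P(M−N) < PQ. Let x* = (N−R)/P, z* = (M−N)/Q, y* = 1 − x* − z*. Then the Jacobian at the interior equilibrium, J = [[x*(1−x*)(Q−P) + x*y*P, x*(1−x*)Q], [−y*(1−y*)P − x*y*(Q−P), −x*y*Q]], has determinant equal to x* y* (1 − x* − y*) P Q, which is positive. -/
/-- The determinant of the interior-equilibrium Jacobian equals
`x* y* (1 − x* − y*) P Q` and is positive. -/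
theorem stmt_6 (M N R P Q : ℝ) (hMN : M > N) (hNR : N > R) (hP : P > 0) (hQ : Q > 0)
    (h1 : 0 < Q * (N - R) + P * (M - N)) (h2 : Q * (N - R) + P * (M - N) < P * Q) :
    let x := (N - R) / P
    let z := (M - N) / Q
    let y := 1 - x - z
    (!![x * (1 - x) * (Q - P) + x * y * P, x * (1 - x) * Q;
        -(y * (1 - y) * P) - x * y * (Q - P), -(x * y * Q)]).det
      = x * y * (1 - x - y) * P * Q ∧
    0 < x * y * (1 - x - y) * P * Q := by
  intro x z y
  have hx : 0 < x := div_pos (by linarith) hP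
  have hz : 0 < z := div_pos (by linarith) hQ
  have hy : 0 < y := by
    have : x + z < 1 := by
      rw [div_add_div _ _ (ne_of_gt hP) (ne_of_gt hQ), div_lt_one (by positivity)]
      nlinarith
    simp only [y]; linarith
  have hzy : 1 - x - y = z := by show 1 - x - (1 - x - z) = z; ring
  constructor
  · rw [Matrix.det_fin_two_of, hzy]
    have : y = 1 - x - z := rfl
    rw [this]; ring
  · rw [hzy]; positivity
end

section
/- If Q < M − R < P, M > N > R, and P(M−N) + Q(N−R) > PQ, then x₀ = (M−R−Q)/(P−Q) ∈ (0,1), λ₁ = x₀(1−x₀)(Q−P) < 0, and λ₂ = N − R − x₀P < 0, so the boundary equilibrium (x₀, 0) of the replicator system is linearly asymptotically stable while all three corner equilibria are unstable. -/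
/-- Case 11: when `Q < M−R < P`, `M > N > R`, and `P(M−N) + Q(N−R) > PQ`, the
CN-boundary equilibrium `(x₀, 0)` lies in `(0,1)` and is linearly asymptotically
stable, while all three corner equilibria are unstable. -/
theorem stmt_15 (M N R P Q : ℝ) (hP : 0 < P) (hQ : 0 < Q)
    (h1 : Q < M - R) (h2 : M - R < P) (hMN : M > N) (hNR : N > R)
    (h3 : P * (M - N) + Q * (N - R) > P * Q) :
    let x0 := (M - R - Q) / (P - Q)
    (0 < x0 ∧ x0 < 1) ∧
    x0 * (1 - x0) * (Q - P) < 0 ∧ N - R - x0 * P < 0 ∧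
    0 < -(M - R - P) ∧ 0 < M - N ∧ 0 < M - R - Q := by
  intro x0
  have hd : 0 < P - Q := by linarith
  have hx0 : 0 < x0 := div_pos (by linarith) hd
  have hx1 : x0 < 1 := (div_lt_one hd).mpr (by linarith)
  refine ⟨⟨hx0, hx1⟩, ?_, ?_, by linarith, by linarith, by linarith⟩
  · have := mul_pos (mul_pos hx0 (by linarith : 0 < 1 - x0)) hd
    nlinarith
  · have : x0 * P = (M - R - Q) * P / (P - Q) := by
      unfold x0; ring
    rw [this, sub_lt_iff_lt_add, ← sub_lt_iff_lt_add', lt_div_iff₀ hd]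
    nlinarith
end

section
/- If Q < M − R < P and M > R > N, then P(M−N) + Q(N−R) > PQ holds automatically, x₀ = (M−R−Q)/(P−Q) ∈ (0,1), and the boundary equilibrium (x₀, 0) satisfies x₀(1−x₀)(Q−P) < 0 and N − R − x₀P < 0, hence is linearly asymptotically stable. -/
/-- Case 13: when `Q < M−R < P` and `M > R > N`, the condition
`P(M−N) + Q(N−R) > PQ` holds automatically, `x₀ = (M−R−Q)/(P−Q) ∈ (0,1)`, and
the boundary equilibrium `(x₀, 0)` is linearly asymptotically stable. -/
theorem stmt_16 (M N R P Q : ℝ) (hP : 0 < P) (hQ : 0 < Q)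
    (h1 : Q < M - R) (h2 : M - R < P) (hMR : M > R) (hRN : R > N) :
    let x0 := (M - R - Q) / (P - Q)
    P * (M - N) + Q * (N - R) > P * Q ∧
    (0 < x0 ∧ x0 < 1) ∧
    x0 * (1 - x0) * (Q - P) < 0 ∧ N - R - x0 * P < 0 := by
  intro x0
  have hPQ : 0 < P - Q := by linarith
  have hx0 : 0 < x0 := div_pos (by linarith) hPQ
  have hx1 : x0 < 1 := (div_lt_one hPQ).mpr (by linarith)
  refine ⟨by nlinarith, ⟨hx0, hx1⟩, ?_, ?_⟩
  · have : 0 < x0 * (1 - x0) := mul_pos hx0 (by linarith)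
    nlinarith
  · nlinarith [mul_pos hx0 hP]
end
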